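/- arXiv:1203.3982 — 2 statements merged into one kernel-verified Lean document; each statement's English description precedes it below -/
import Mathlib

section
/- Let α ≥ 0 and consider the ODE system ċ = a c, ȧ(2c + α) = −4a²c − αa² for complex-valued functions c(t), a(t) with 2c(t) + α ≠ 0. Then along any solution, the quantity c² + αc satisfies d²/dt²(c² + αc) = 0, i.e., c(t)² + αc(t) is an affine function of t. -/
/-!
The quantity `(2c + α)ċ = d/dt (c² + αc)` is a first integral: with `ċ = ac` its derivative is
`c · (ȧ(2c + α) + 4a²c + αa²) = 0`. So `c² + αc` has constant derivative on the interval, hence is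
affine there.
-/

section Affine

variable {E : Type*} [NormedAddCommGroup E] [NormedSpace ℝ E] {s : Set ℝ} {f g : ℝ → E}

theorem Convex.is_const_of_hasDerivWithinAt_zero (hs : Convex ℝ s)
    (hf : ∀ x ∈ s, HasDerivWithinAt f 0 s x) {x y : ℝ} (hx : x ∈ s) (hy : y ∈ s) :
    f x = f y := by
  have := hs.norm_image_sub_le_of_norm_hasDerivWithin_le hf (C := 0) (by simp) hx hy
  rw [zero_mul, norm_le_zero_iff, sub_eq_zero] at this
  exact this.symm

theorem Convex.exists_eq_add_smul_of_hasDerivWithinAt_of_hasDerivWithinAt_zero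
    (hs : Convex ℝ s) (hf : ∀ x ∈ s, HasDerivWithinAt f (g x) s x)
    (hg : ∀ x ∈ s, HasDerivWithinAt g 0 s x) :
    ∃ A B : E, ∀ x ∈ s, f x = A + x • B := by
  rcases s.eq_empty_or_nonempty with rfl | ⟨x₀, hx₀⟩
  · exact ⟨0, 0, by simp⟩
  have hgx : ∀ x ∈ s, g x = g x₀ := fun x hx => hs.is_const_of_hasDerivWithinAt_zero hg hx hx₀
  have hf' : ∀ x ∈ s, HasDerivWithinAt (fun x => f x - x • g x₀) 0 s x := fun x hx =>
    ((hf x hx).sub ((hasDerivWithinAt_id x s).smul_const (g x₀))).congr_deriv (by simp [hgx x hx])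
  refine ⟨f x₀ - x₀ • g x₀, g x₀, fun x hx => ?_⟩
  rw [← hs.is_const_of_hasDerivWithinAt_zero hf' hx hx₀, sub_add_cancel]

end Affine

section Derivatives

variable {𝕜 : Type*} [NontriviallyNormedField 𝕜] {𝔸 : Type*} [NormedCommRing 𝔸]
  [NormedAlgebra 𝕜 𝔸] {c v : 𝕜 → 𝔸} {c' w α : 𝔸} {t : 𝕜}

theorem HasDerivAt.sq_add_const_mul (hc : HasDerivAt c c' t) :
    HasDerivAt (fun s => c s ^ 2 + α * c s) ((2 * c t + α) * c') t :=
  ((hc.pow 2).add (hc.const_mul α)).congr_deriv (by ring)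

theorem hasDerivAt_two_mul_add_mul_eq_zero (hc : HasDerivAt c (v t) t) (hv : HasDerivAt v w t)
    (hode : (2 * c t + α) * w + 2 * v t ^ 2 = 0) :
    HasDerivAt (fun s => (2 * c s + α) * v s) 0 t :=
  ((hc.const_mul 2).add_const α |>.mul hv).congr_deriv (by linear_combination hode)

end Derivatives

theorem c_sq_plus_alpha_c_affine_general (α : ℝ)
    (I : Set ℝ) (hI : Convex ℝ I)
    (c a a' : ℝ → ℂ)
    (hc : ∀ t ∈ I, HasDerivAt c (a t * c t) t)
    (ha : ∀ t ∈ I, HasDerivAt a (a' t) t)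
    (heq : ∀ t ∈ I, a' t * (2 * c t + (α : ℂ))
      = -4 * (a t) ^ 2 * c t - (α : ℂ) * (a t) ^ 2) :
    ∃ A B : ℂ, ∀ t ∈ I, (c t) ^ 2 + (α : ℂ) * c t = A + B * t := by
  have hconst : ∀ t ∈ I, HasDerivAt (fun s => (2 * c s + α) * (a s * c s)) 0 t := fun t ht =>
    hasDerivAt_two_mul_add_mul_eq_zero (hc t ht) ((ha t ht).mul (hc t ht))
      (by linear_combination c t * heq t ht)
  obtain ⟨A, B, hAB⟩ := hI.exists_eq_add_smul_of_hasDerivWithinAt_of_hasDerivWithinAt_zero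
    (fun t ht => ((hc t ht).sq_add_const_mul (α := (α : ℂ))).hasDerivWithinAt)
    (fun t ht => (hconst t ht).hasDerivWithinAt)
  exact ⟨A, B, fun t ht => by rw [hAB t ht, Complex.real_smul, mul_comm]⟩

/-- Along solutions of ċ = ac, ȧ(2c+α) = −4a²c − αa², the quantity c² + αc is affine in t. -/
theorem c_sq_plus_alpha_c_affine (α : ℝ) (hα : 0 ≤ α)
    (I : Set ℝ) (hI : Convex ℝ I)
    (c a a' : ℝ → ℂ)
    (hc : ∀ t ∈ I, HasDerivAt c (a t * c t) t)
    (ha : ∀ t ∈ I, HasDerivAt a (a' t) t)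
    (hne : ∀ t ∈ I, 2 * c t + (α : ℂ) ≠ 0)
    (heq : ∀ t ∈ I, a' t * (2 * c t + (α : ℂ))
      = -4 * (a t) ^ 2 * c t - (α : ℂ) * (a t) ^ 2) :
    ∃ A B : ℂ, ∀ t ∈ I, (c t) ^ 2 + (α : ℂ) * c t = A + B * t :=
  c_sq_plus_alpha_c_affine_general α I hI c a a' hc ha heq
end

section
/- Let α = 0 and consider the system ċ = ac, ȧ·2c = −4a²c on an interval where c(t) ≠ 0. Then c(t)² is affine in t: c(t)² = c(0)² + 2c(0)²a(0)·t. Consequently the geodesic from c(0)=1 to c(1)=r, with 0 < r real, in the pure-scaling submanifold is given by c(t) = √(1 + (r²−1)t). -/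
/-! The quantity `a c²` is a first integral of the system: its derivative is
`c/2 · (ȧ · 2c + 4a²c) = 0`. Hence `(c²)˙ = 2ac²` is constant, so `c²` is affine, and the
boundary values `c 0 = 1`, `c 1 = r` fix the slope `r² - 1`. -/

open Set

theorem eq_add_mul_sub_of_hasDerivAt_const {f : ℝ → ℝ} {C x y : ℝ}
    (hf : ∀ t ∈ Icc x y, HasDerivAt f C t) :
    ∀ t ∈ Icc x y, f t = f x + C * (t - x) := by
  have hline : ∀ t, HasDerivAt (fun s => f x + C * (s - x)) C t := fun t => by
    simpa using ((hasDerivAt_id t).sub_const x).const_mul C |>.const_add (f x)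
  refine eq_of_has_deriv_right_eq (f' := fun _ => C)
    (fun t ht => (hf t (Ico_subset_Icc_self ht)).hasDerivWithinAt)
    (fun t _ => (hline t).hasDerivWithinAt)
    (fun t ht => (hf t ht).continuousAt.continuousWithinAt)
    (fun t _ => (hline t).continuousAt.continuousWithinAt) (by simp)

theorem eq_sqrt_of_sq_eq_one_add_mul {x y m t : ℝ} (hx : 0 ≤ x) (hxsq : x ^ 2 = 1 + m * t)
    (hysq : y ^ 2 = 1 + m) : x = Real.sqrt (1 + (y ^ 2 - 1) * t) := by
  rw [← Real.sqrt_sq hx, hxsq, hysq, add_sub_cancel_left]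

section PureScaling

variable {c a : ℝ → ℝ} {t : ℝ}

theorem hasDerivAt_sq_of_hasDerivAt_scaling (hc : HasDerivAt c (a t * c t) t) :
    HasDerivAt (fun s => c s ^ 2) (2 * (a t * c t ^ 2)) t :=
  (hc.fun_pow 2).congr_deriv (by ring)

theorem hasDerivAt_mul_sq_eq_zero {a' : ℝ → ℝ} (hc : HasDerivAt c (a t * c t) t)
    (ha : HasDerivAt a (a' t) t) (heq : a' t * (2 * c t) = -4 * a t ^ 2 * c t) :
    HasDerivAt (fun s => a s * c s ^ 2) 0 t :=
  (ha.fun_mul (hc.fun_pow 2)).congr_deriv (by linear_combination (c t / 2) * heq)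

end PureScaling

/-- For α = 0 and the pure-scaling system ċ = ac, ȧ·2c = −4a²c with c > 0 on [0,1]:
    c(t)² = c(0)² + 2c(0)²a(0)t, and the geodesic from c(0)=1 to c(1)=r (r > 0)
    is c(t) = √(1 + (r²−1)t). -/
theorem pure_scaling_geodesic
    (c a a' : ℝ → ℝ)
    (hcpos : ∀ t ∈ Set.Icc (0 : ℝ) 1, 0 < c t)
    (hc : ∀ t ∈ Set.Icc (0 : ℝ) 1, HasDerivAt c (a t * c t) t)
    (ha : ∀ t ∈ Set.Icc (0 : ℝ) 1, HasDerivAt a (a' t) t)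
    (heq : ∀ t ∈ Set.Icc (0 : ℝ) 1, a' t * (2 * c t) = -4 * (a t) ^ 2 * c t) :
    (∀ t ∈ Set.Icc (0 : ℝ) 1, (c t) ^ 2 = (c 0) ^ 2 + 2 * (c 0) ^ 2 * a 0 * t) ∧
    (∀ r : ℝ, 0 < r → c 0 = 1 → c 1 = r →
      ∀ t ∈ Set.Icc (0 : ℝ) 1, c t = Real.sqrt (1 + (r ^ 2 - 1) * t)) := by
  have hmomentum : ∀ t ∈ Icc (0 : ℝ) 1, a t * c t ^ 2 = a 0 * c 0 ^ 2 := by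
    simpa using eq_add_mul_sub_of_hasDerivAt_const fun t ht =>
      hasDerivAt_mul_sq_eq_zero (hc t ht) (ha t ht) (heq t ht)
  have haffine : ∀ t ∈ Icc (0 : ℝ) 1, c t ^ 2 = c 0 ^ 2 + 2 * c 0 ^ 2 * a 0 * t := by
    intro t ht
    have hsq_deriv : ∀ s ∈ Icc (0 : ℝ) 1,
        HasDerivAt (fun s => c s ^ 2) (2 * (a 0 * c 0 ^ 2)) s := fun s hs =>
      hmomentum s hs ▸ hasDerivAt_sq_of_hasDerivAt_scaling (hc s hs)
    linear_combination eq_add_mul_sub_of_hasDerivAt_const hsq_deriv t ht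
  refine ⟨haffine, fun r _ hc0 hc1 t ht => ?_⟩
  have hsq := haffine t ht
  have hsq_one := haffine 1 (by simp)
  rw [hc0] at hsq hsq_one
  rw [hc1] at hsq_one
  exact eq_sqrt_of_sq_eq_one_add_mul (m := 2 * a 0) (hcpos t ht).le (by linear_combination hsq)
    (by linear_combination hsq_one)
end
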